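/- Let H be a Hopf algebra acting on an (ℕ × Γ)-graded algebra A preserving the grading, with twisting system τ commuting with the H-action. Extend τ to τ' on the smash product A # H by τ'_γ(x # h) = τ_γ(x) # h. Then τ' is a twisting system of A # H (with deg(1#h) = (0, 1_Γ)) and there is a graded algebra isomorphism (A # H)^{τ'} ≅ (A^τ) # H. -/

import Mathlib

noncomputable section

open TensorProduct DirectSum

variable {k A Γ H : Type*} [Field k] [AddGroup Γ] [DecidableEq Γ]
  [Ring A] [Algebra k A] [Ring H] [HopfAlgebra k H]

variable (𝒜 : ℕ × Γ → Submodule k A) [GradedAlgebra 𝒜] (τ : Γ → (A ≃ₐ[k] A))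

/-- The twisted multiplication `x ∗ y`: for `x` homogeneous of degree `(n, γ)`,
`x ∗ y = x · τ_γ(y)`. -/
def twistMul (x y : A) : A :=
  DFinsupp.sumAddHom
    (fun d : ℕ × Γ =>
      (AddMonoidHom.mulRight ((τ d.2) y)).comp ((𝒜 d).subtype.toAddMonoidHom))
    (DirectSum.decompose 𝒜 x)

/-- The action `H ⊗ A → A` as a linear map. -/
def actT (act : H →ₗ[k] A →ₗ[k] A) : H ⊗[k] A →ₗ[k] A := TensorProduct.lift act

/-- The map `h ⊗ (x' ⊗ h') ↦ Σ (h₁·x') ⊗ (h₂h')`. -/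
def smashHalf (act : H →ₗ[k] A →ₗ[k] A) : H ⊗[k] (A ⊗[k] H) →ₗ[k] A ⊗[k] H :=
  (TensorProduct.map (actT act) (LinearMap.mul' k H)) ∘ₗ
    (TensorProduct.tensorTensorTensorComm k H H A H).toLinearMap ∘ₗ
    (TensorProduct.map (Coalgebra.comul (R := k)) LinearMap.id)

/-- The multiplication of the smash product `A # H`:
`(x # h)(x' # h') = Σ x(h₁·x') # h₂h'`. -/
def smashMul (act : H →ₗ[k] A →ₗ[k] A) :
    (A ⊗[k] H) →ₗ[k] (A ⊗[k] H) →ₗ[k] A ⊗[k] H :=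
  TensorProduct.curry
    ((TensorProduct.map (LinearMap.mul' k A) LinearMap.id) ∘ₗ
      (TensorProduct.assoc k A A H).symm.toLinearMap ∘ₗ
      (TensorProduct.map LinearMap.id (smashHalf act)) ∘ₗ
      (TensorProduct.assoc k A H (A ⊗[k] H)).toLinearMap)

/-- The extension `τ'_γ = τ_γ # id` of the twisting system to the smash product. -/
def twistSmash (γ : Γ) : A ⊗[k] H →ₗ[k] A ⊗[k] H :=
  TensorProduct.map (τ γ).toLinearMap LinearMap.id

theorem smashMul_tmul_of_comul_eq (act : H →ₗ[k] A →ₗ[k] A) (x x' : A) (h h' : H)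
    {ι : Type*} (s : Finset ι) (a b : ι → H)
    (hc : Coalgebra.comul (R := k) h = ∑ i ∈ s, a i ⊗ₜ[k] b i) :
    smashMul act (x ⊗ₜ[k] h) (x' ⊗ₜ[k] h') =
      ∑ i ∈ s, (x * act (a i) x') ⊗ₜ[k] (b i * h') := by
  simp only [smashMul, smashHalf, actT, TensorProduct.curry_apply, LinearMap.comp_apply,
    LinearEquiv.coe_coe, TensorProduct.assoc_tmul, TensorProduct.map_tmul,
    LinearMap.id_coe, id_eq, hc, TensorProduct.sum_tmul, map_sum,
    TensorProduct.tensorTensorTensorComm_tmul, TensorProduct.tmul_sum,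
    TensorProduct.assoc_symm_tmul, TensorProduct.lift.tmul, LinearMap.mul'_apply]

theorem twistMul_of_mem {n : ℕ} {γ : Γ} {x : A} (hx : x ∈ 𝒜 (n, γ)) (y : A) :
    twistMul 𝒜 τ x y = x * τ γ y := by
  rw [twistMul, DirectSum.decompose_of_mem 𝒜 hx]
  erw [DFinsupp.singleAddHom_apply, DFinsupp.sumAddHom_single]
  rfl

omit [AddGroup Γ] [DecidableEq Γ] in
@[simp]
theorem twistSmash_tmul (γ : Γ) (x : A) (h : H) :
    twistSmash τ γ (x ⊗ₜ[k] h) = τ γ x ⊗ₜ[k] h :=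
  rfl

omit [DecidableEq Γ] in
theorem twistSmash_twistSmash (hτ : ∀ (γ₁ γ₂ : Γ) (a : A), τ γ₁ (τ γ₂ a) = τ (γ₁ + γ₂) a)
    (γ₁ γ₂ : Γ) (z : A ⊗[k] H) :
    twistSmash τ γ₁ (twistSmash τ γ₂ z) = twistSmash τ (γ₁ + γ₂) z := by
  induction z using TensorProduct.induction_on with
  | zero => simp only [map_zero]
  | tmul x h => simp only [twistSmash_tmul, hτ]
  | add u v hu hv => simp only [map_add, hu, hv]

omit [AddGroup Γ] [DecidableEq Γ] in
theorem twistSmash_smashMul_tmul (act : H →ₗ[k] A →ₗ[k] A)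
    (hcomm : ∀ (h : H) (γ : Γ) (x : A), act h (τ γ x) = τ γ (act h x))
    (γ : Γ) (x x' : A) (h h' : H) :
    twistSmash τ γ (smashMul act (x ⊗ₜ[k] h) (x' ⊗ₜ[k] h')) =
      smashMul act (twistSmash τ γ (x ⊗ₜ[k] h)) (twistSmash τ γ (x' ⊗ₜ[k] h')) := by
  obtain ⟨S, hS⟩ := TensorProduct.exists_finset (Coalgebra.comul (R := k) h)
  simp only [twistSmash_tmul, smashMul_tmul_of_comul_eq act _ _ h h' S _ _ hS, map_sum,
    map_mul, hcomm]

omit [AddGroup Γ] [DecidableEq Γ] in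
theorem twistSmash_smashMul (act : H →ₗ[k] A →ₗ[k] A)
    (hcomm : ∀ (h : H) (γ : Γ) (x : A), act h (τ γ x) = τ γ (act h x))
    (γ : Γ) (u v : A ⊗[k] H) :
    twistSmash τ γ (smashMul act u v) =
      smashMul act (twistSmash τ γ u) (twistSmash τ γ v) := by
  induction u using TensorProduct.induction_on with
  | zero => simp only [map_zero, LinearMap.zero_apply]
  | add u u' hu hu' => simp only [map_add, LinearMap.add_apply, hu, hu']
  | tmul x h =>
    induction v using TensorProduct.induction_on with
    | zero => simp only [map_zero]
    | add v v' hv hv' => simp only [map_add, hv, hv']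
    | tmul x' h' => exact twistSmash_smashMul_tmul τ act hcomm γ x x' h h'

theorem smashMul_twistSmash_of_mem (act : H →ₗ[k] A →ₗ[k] A)
    (hcomm : ∀ (h : H) (γ : Γ) (x : A), act h (τ γ x) = τ γ (act h x))
    {n : ℕ} {γ : Γ} {x : A} (hx : x ∈ 𝒜 (n, γ)) (x' : A) (h h' : H)
    {ι : Type*} (s : Finset ι) (a b : ι → H)
    (hc : Coalgebra.comul (R := k) h = ∑ i ∈ s, a i ⊗ₜ[k] b i) :
    smashMul act (x ⊗ₜ[k] h) (twistSmash τ γ (x' ⊗ₜ[k] h')) =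
      ∑ i ∈ s, twistMul 𝒜 τ x (act (a i) x') ⊗ₜ[k] (b i * h') := by
  simp only [twistSmash_tmul, smashMul_tmul_of_comul_eq act _ _ h h' s a b hc, hcomm,
    twistMul_of_mem 𝒜 τ hx]

theorem smash_twist_iso
    (hτsys : ∀ (γ₁ γ₂ : Γ) (a : A), τ γ₁ (τ γ₂ a) = τ (γ₁ + γ₂) a)
    (act : H →ₗ[k] A →ₗ[k] A)
    (hcomm : ∀ (h : H) (γ : Γ) (x : A), act h ((τ γ) x) = (τ γ) (act h x)) :
    -- `τ'` is a twisting system of `A # H` …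
    (∀ (γ₁ γ₂ : Γ) (z : A ⊗[k] H),
      twistSmash τ γ₁ (twistSmash τ γ₂ z) = twistSmash τ (γ₁ + γ₂) z) ∧
    (∀ (γ : Γ) (u v : A ⊗[k] H),
      twistSmash τ γ (smashMul act u v) =
        smashMul act (twistSmash τ γ u) (twistSmash τ γ v)) ∧
    -- … and `(A # H)^{τ'} = (A^τ) # H`
    (∀ (n : ℕ) (γ : Γ) (x : A), x ∈ 𝒜 (n, γ) → ∀ (x' : A) (h h' : H)
      {ι : Type} (s : Finset ι) (a b : ι → H),
      Coalgebra.comul (R := k) h = ∑ i ∈ s, a i ⊗ₜ[k] b i →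
        smashMul act (x ⊗ₜ[k] h) (twistSmash τ γ (x' ⊗ₜ[k] h')) =
          ∑ i ∈ s, (twistMul 𝒜 τ x (act (a i) x')) ⊗ₜ[k] (b i * h')) :=
  ⟨twistSmash_twistSmash τ hτsys, twistSmash_smashMul τ act hcomm,
    fun _ _ _ hx x' h h' _ s a b hc =>
      smashMul_twistSmash_of_mem 𝒜 τ act hcomm hx x' h h' s a b hc⟩

end
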